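/- arXiv:1801.03538 — 8 statements merged into one kernel-verified Lean document; each statement's English description precedes it below -/
import Mathlib

section
/- Let T and T₁ be linearly ordered sets equipped with their order topologies, and let X be a topological space. If f : T × X → T₁ is separately continuous (i.e., for each x ∈ X the map t ↦ f(t,x) is continuous, and for each t ∈ T the map x ↦ f(t,x) is continuous) and for every x ∈ X the function t ↦ f(t,x) is monotone on T, then f is jointly continuous on T × X with the product topology. -/
/-!
Fix `(t₀, x₀)` and `b < f t₀ x₀`. Continuity in `t` gives an interval `[l, u]` that is a
neighbourhood of `t₀` with `b < f l x₀` and `b < f u x₀`; continuity in `x` at the two endpoints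
keeps both inequalities on a neighbourhood `V` of `x₀`. For `x ∈ V`, monotonicity of `f · x`
in one direction or the other bounds `f t x` below by `f l x` or by `f u x` on all of `[l, u]`,
so `b < f` on `[l, u] ×ˢ V`. The upper bounds follow by passing to `T₁ᵒᵈ`.
-/

open Filter Set Topology

section

variable {T T₁ X : Type*} [LinearOrder T] [TopologicalSpace T] [OrderTopology T]
  [LinearOrder T₁] [TopologicalSpace X] {f : T → X → T₁} {t₀ : T} {x₀ : X}

theorem eventually_lt_of_monotone_or_antitone [TopologicalSpace T₁] [OrderClosedTopology T₁]
    (hct : ContinuousAt (f · x₀) t₀) (hcx : ∀ t, ContinuousAt (f t ·) x₀)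
    (hm : ∀ x, Monotone (f · x) ∨ Antitone (f · x)) {b : T₁} (hb : b < f t₀ x₀) :
    ∀ᶠ q in 𝓝 (t₀, x₀), b < f q.1 q.2 := by
  obtain ⟨l, u, ⟨hlt₀, ht₀u⟩, hlu, hlu_sub⟩ :=
    exists_Icc_mem_subset_of_mem_nhds (hct.eventually_mem (isOpen_Ioi.mem_nhds hb))
  have hl : b < f l x₀ := hlu_sub ⟨le_rfl, hlt₀.trans ht₀u⟩
  have hu : b < f u x₀ := hlu_sub ⟨hlt₀.trans ht₀u, le_rfl⟩
  have hV : ∀ᶠ x in 𝓝 x₀, b < f l x ∧ b < f u x :=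
    ((hcx l).eventually_mem (isOpen_Ioi.mem_nhds hl)).and
      ((hcx u).eventually_mem (isOpen_Ioi.mem_nhds hu))
  filter_upwards [prod_mem_nhds hlu hV] with ⟨t, x⟩ ⟨⟨hlt, htu⟩, hlx, hux⟩
  rcases hm x with hmono | hanti
  · exact hlx.trans_le (hmono hlt)
  · exact hux.trans_le (hanti htu)

theorem continuousAt_uncurry_of_monotone_or_antitone [TopologicalSpace T₁] [OrderTopology T₁]
    (hct : ContinuousAt (f · x₀) t₀) (hcx : ∀ t, ContinuousAt (f t ·) x₀)
    (hm : ∀ x, Monotone (f · x) ∨ Antitone (f · x)) :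
    ContinuousAt (fun p : T × X => f p.1 p.2) (t₀, x₀) :=
  tendsto_order.2
    ⟨fun _ hb => eventually_lt_of_monotone_or_antitone hct hcx hm hb,
     fun _ hb => eventually_lt_of_monotone_or_antitone (T₁ := T₁ᵒᵈ) hct hcx
      (fun x => (hm x).symm.imp Antitone.dual_right Monotone.dual_right) hb⟩

end

theorem young_generalized {T T₁ X : Type*}
    [LinearOrder T] [TopologicalSpace T] [OrderTopology T]
    [LinearOrder T₁] [TopologicalSpace T₁] [OrderTopology T₁]
    [TopologicalSpace X]
    (f : T → X → T₁)
    (hct : ∀ x, Continuous fun t => f t x)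
    (hcx : ∀ t, Continuous fun x => f t x)
    (hm : ∀ x, Monotone (fun t => f t x) ∨ Antitone (fun t => f t x)) :
    Continuous fun p : T × X => f p.1 p.2 :=
  continuous_iff_continuousAt.2 fun ⟨_, x₀⟩ =>
    continuousAt_uncurry_of_monotone_or_antitone (hct x₀).continuousAt
      (fun t => (hcx t).continuousAt) hm
end

section
/- Let T and T₁ be linearly ordered sets with their order topologies and X a topological space. If f : T × X → T₁ is separately continuous and for every x ∈ X the function t ↦ f(t,x) is monotone (nondecreasing), then f is jointly continuous on T × X. -/
/-!
If `a < f t₀ x₀`, continuity in `t` gives `s ≤ t₀` with `a < f s x₀` such that `[s, ∞)` is a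
neighbourhood of `t₀`; continuity in `x` gives a neighbourhood `V` of `x₀` on which `a < f s ·`,
and monotonicity in `t` propagates this to `a < f` on `[s, ∞) × V`. So strict superlevel sets of
`f` are open, and strict sublevel sets are too by the same argument in the order duals.
-/

open Filter Topology Set OrderDual

theorem isOpen_setOf_lt_of_monotone_of_continuous {T T₁ X : Type*}
    [LinearOrder T] [TopologicalSpace T] [OrderTopology T]
    [LinearOrder T₁] [TopologicalSpace T₁] [ClosedIicTopology T₁]
    [TopologicalSpace X]
    (f : T → X → T₁)
    (hct : ∀ x, Continuous fun t => f t x)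
    (hcx : ∀ t, Continuous fun x => f t x)
    (hm : ∀ x, Monotone fun t => f t x) (a : T₁) :
    IsOpen {p : T × X | a < f p.1 p.2} := by
  rw [isOpen_iff_mem_nhds]
  rintro ⟨t₀, x₀⟩ (h : a < f t₀ x₀)
  obtain ⟨s, c, hs, hsc, hsc_sub⟩ := exists_Icc_mem_subset_of_mem_nhds
    ((isOpen_Ioi.preimage (hct x₀)).mem_nhds h)
  have has : a < f s x₀ := hsc_sub (left_mem_Icc.2 (hs.1.trans hs.2))
  filter_upwards [prod_mem_nhds hsc ((isOpen_Ioi.preimage (hcx s)).mem_nhds has)] with p hp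
  exact hp.2.trans_le (hm p.2 hp.1.1)

theorem young_monotone {T T₁ X : Type*}
    [LinearOrder T] [TopologicalSpace T] [OrderTopology T]
    [LinearOrder T₁] [TopologicalSpace T₁] [OrderTopology T₁]
    [TopologicalSpace X]
    (f : T → X → T₁)
    (hct : ∀ x, Continuous fun t => f t x)
    (hcx : ∀ t, Continuous fun x => f t x)
    (hm : ∀ x, Monotone fun t => f t x) :
    Continuous fun p : T × X => f p.1 p.2 := by
  refine OrderTopology.continuous_iff.2 fun a =>
    ⟨isOpen_setOf_lt_of_monotone_of_continuous f hct hcx hm a, ?_⟩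
  exact isOpen_setOf_lt_of_monotone_of_continuous (T := Tᵒᵈ) (T₁ := T₁ᵒᵈ)
    (fun t x => toDual (f (ofDual t) x)) hct hcx (fun x => (hm x).dual) (toDual a)
end

section
/- Let T and T₁ be linearly ordered sets with their order topologies and X a topological space. If f : T × X → T₁ is separately continuous and for every x ∈ X the function t ↦ f(t,x) is antitone (nonincreasing), then f is jointly continuous on T × X. -/
open Filter Set Topology

section

variable {T T₁ X : Type*} [LinearOrder T] [TopologicalSpace T] [OrderTopology T]
  [LinearOrder T₁] [TopologicalSpace T₁] [TopologicalSpace X]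

theorem exists_mem_Iic_mem_nhds {t₀ : T} {s : Set T} (hs : s ∈ 𝓝 t₀) :
    ∃ t₁ ∈ s, Iic t₁ ∈ 𝓝 t₀ := by
  obtain ⟨b, c, ⟨hbt₀, ht₀c⟩, hIcc, hsub⟩ := exists_Icc_mem_subset_of_mem_nhds hs
  exact ⟨c, hsub ⟨hbt₀.trans ht₀c, le_rfl⟩, mem_of_superset hIcc Icc_subset_Iic_self⟩

/-- Pick `t₁` with `a < f t₁ x₀` and `Iic t₁ ∈ 𝓝 t₀`: on `Iic t₁ × X` antitonicity gives
`f t₁ x ≤ f t x`, so lower semicontinuity of `f t₁` alone controls `f` near `(t₀, x₀)`. -/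
theorem lowerSemicontinuousAt_uncurry_of_antitone [ClosedIicTopology T₁] {f : T → X → T₁}
    {t₀ : T} {x₀ : X} (hct : ContinuousAt (f · x₀) t₀) (hcx : ∀ t, LowerSemicontinuous (f t))
    (hm : ∀ x, Antitone (f · x)) :
    LowerSemicontinuousAt (fun p : T × X => f p.1 p.2) (t₀, x₀) := by
  intro a ha
  obtain ⟨t₁, hat₁, hIic⟩ := exists_mem_Iic_mem_nhds (hct.eventually (eventually_gt_nhds ha))
  filter_upwards [Eventually.prod_nhds hIic (hcx t₁ x₀ a hat₁)] with p ⟨hp₁, hp₂⟩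
  exact hp₂.trans_le (hm p.2 hp₁)

theorem upperSemicontinuousAt_uncurry_of_antitone [ClosedIciTopology T₁] {f : T → X → T₁}
    {t₀ : T} {x₀ : X} (hct : ContinuousAt (f · x₀) t₀) (hcx : ∀ t, UpperSemicontinuous (f t))
    (hm : ∀ x, Antitone (f · x)) :
    UpperSemicontinuousAt (fun p : T × X => f p.1 p.2) (t₀, x₀) :=
  lowerSemicontinuousAt_uncurry_of_antitone (T := Tᵒᵈ) (T₁ := T₁ᵒᵈ) hct hcx fun x => (hm x).dual

end

theorem young_antitone {T T₁ X : Type*}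
    [LinearOrder T] [TopologicalSpace T] [OrderTopology T]
    [LinearOrder T₁] [TopologicalSpace T₁] [OrderTopology T₁]
    [TopologicalSpace X]
    (f : T → X → T₁)
    (hct : ∀ x, Continuous fun t => f t x)
    (hcx : ∀ t, Continuous fun x => f t x)
    (hm : ∀ x, Antitone fun t => f t x) :
    Continuous fun p : T × X => f p.1 p.2 :=
  continuous_iff_continuousAt.2 fun ⟨_, x₀⟩ => continuousAt_iff_lower_upperSemicontinuousAt.2
    ⟨lowerSemicontinuousAt_uncurry_of_antitone (hct x₀).continuousAt
        (fun t => (hcx t).lowerSemicontinuous) hm,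
      upperSemicontinuousAt_uncurry_of_antitone (hct x₀).continuousAt
        (fun t => (hcx t).upperSemicontinuous) hm⟩
end

section
/- (Young's theorem) If f : ℝ × ℝ → ℝ is continuous in each variable separately and for every y ∈ ℝ the function x ↦ f(x,y) is monotone, then f is jointly continuous on ℝ². -/
/-!
Fix `(a, b)` and a bound `u > f a b`. Continuity of `f · b` gives `x₁ < a < x₂` with
`f x₁ b < u` and `f x₂ b < u`, and continuity of `f x₁` and `f x₂` keeps both below `u` for `y`
near `b`. Since `f · y` is monotone, on `x₁ ≤ x ≤ x₂` its value lies between `f x₁ y` and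
`f x₂ y`, hence below `u`, on a whole product neighbourhood of `(a, b)`. Lower bounds follow by
reversing the order of the codomain.
-/

open Filter Topology

theorem le_max_of_monotone_or_antitone {α β : Type*} [Preorder α] [LinearOrder β] {g : α → β}
    (hg : Monotone g ∨ Antitone g) {x₁ x x₂ : α} (h₁ : x₁ ≤ x) (h₂ : x ≤ x₂) :
    g x ≤ max (g x₁) (g x₂) := by
  rcases hg with hg | hg
  · exact le_max_of_le_right (hg h₂)
  · exact le_max_of_le_left (hg h₁)

section SeparatelyContinuous

variable {X Y β : Type*} [LinearOrder X] [TopologicalSpace X] [OrderTopology X]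
  [DenselyOrdered X] [NoMinOrder X] [NoMaxOrder X] [TopologicalSpace Y]
  [LinearOrder β] [TopologicalSpace β] [OrderTopology β]
  {f : X → Y → β} {a : X} {b : Y}

theorem eventually_lt_of_separately_continuousAt_of_monotone
    (hx : ContinuousAt (f · b) a) (hy : ∀ x, ContinuousAt (f x) b)
    (hm : ∀ y, Monotone (f · y) ∨ Antitone (f · y)) {u : β} (hu : f a b < u) :
    ∀ᶠ p : X × Y in 𝓝 (a, b), f p.1 p.2 < u := by
  have hxu : ∀ᶠ x in 𝓝 a, f x b < u := hx.eventually_lt_const hu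
  obtain ⟨x₁, hx₁a, hx₁u⟩ := hxu.exists_lt
  obtain ⟨x₂, hax₂, hx₂u⟩ := hxu.exists_gt
  have hyu : ∀ᶠ y in 𝓝 b, f x₁ y < u ∧ f x₂ y < u :=
    ((hy x₁).eventually_lt_const hx₁u).and ((hy x₂).eventually_lt_const hx₂u)
  filter_upwards [Eventually.prod_nhds (Ioo_mem_nhds hx₁a hax₂) hyu] with p ⟨⟨h₁, h₂⟩, hu₁, hu₂⟩
  exact (le_max_of_monotone_or_antitone (hm p.2) h₁.le h₂.le).trans_lt (max_lt hu₁ hu₂)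

theorem continuousAt_of_separately_continuousAt_of_monotone
    (hx : ContinuousAt (f · b) a) (hy : ∀ x, ContinuousAt (f x) b)
    (hm : ∀ y, Monotone (f · y) ∨ Antitone (f · y)) :
    ContinuousAt (fun p : X × Y => f p.1 p.2) (a, b) :=
  tendsto_order.2
    ⟨fun _ hl => eventually_lt_of_separately_continuousAt_of_monotone (β := βᵒᵈ) hx hy
      (fun y => (hm y).symm) hl,
    fun _ hu => eventually_lt_of_separately_continuousAt_of_monotone hx hy hm hu⟩

theorem continuous_of_separately_continuous_of_monotone
    (hcx : ∀ y, Continuous (f · y)) (hcy : ∀ x, Continuous (f x))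
    (hm : ∀ y, Monotone (f · y) ∨ Antitone (f · y)) :
    Continuous fun p : X × Y => f p.1 p.2 :=
  continuous_iff_continuousAt.2 fun p =>
    continuousAt_of_separately_continuousAt_of_monotone (hcx p.2).continuousAt
      (fun x => (hcy x).continuousAt) hm

end SeparatelyContinuous

theorem young_real (f : ℝ → ℝ → ℝ)
    (hcx : ∀ y, Continuous fun x => f x y)
    (hcy : ∀ x, Continuous fun y => f x y)
    (hm : ∀ y, Monotone (fun x => f x y) ∨ Antitone (fun x => f x y)) :
    Continuous fun p : ℝ × ℝ => f p.1 p.2 :=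
  continuous_of_separately_continuous_of_monotone hcx hcy hm
end

section
/- (Kruse–Deely theorem) Let f : ℝᵈ × ℝ → ℝ (d ≥ 1) be continuous in each of its d+1 variables separately, and suppose f(t₁, …, t_d, τ) is monotone in each t_i separately (for each fixed choice of the other variables). Then f is jointly continuous on ℝ^{d+1}. -/
/-!
Fix τ₀ and a point a. If f is monotone or antitone in each coordinate of t, then on a box
around a the value f t τ lies between the values of f(·, τ) at two vertices of the box. The
vertices are finitely many, so continuity in τ at each of them is uniform, and joint continuity
at (a, τ₀) reduces to continuity of the slice f(·, τ₀) at a. That slice is a separately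
continuous, separately monotone function of d variables, jointly continuous by the same
argument applied to its last coordinate in the role of τ and induction on d.
-/

open Set Filter Topology Function

section SeparatelyMonotone

variable {ι α β : Type*}

def boxCorners (lo hi : ι → α) : Set (ι → α) :=
  univ.pi fun i => {lo i, hi i}

theorem boxCorners_subset_Icc [Preorder α] {lo hi : ι → α} (h : lo ≤ hi) :
    boxCorners lo hi ⊆ Icc lo hi := by
  intro u hu
  refine ⟨fun i => ?_, fun i => ?_⟩ <;>
    obtain hui | hui : u i = lo i ∨ u i = hi i := hu i trivial <;> simp [hui, h i]

theorem finite_boxCorners [Finite ι] (lo hi : ι → α) : (boxCorners lo hi).Finite :=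
  Set.Finite.pi fun _ => toFinite _

variable [DecidableEq ι]

/-- The direction of monotonicity may depend on the coordinate and on the other variables. -/
def SeparatelyMonotone [Preorder α] [Preorder β] (G : (ι → α) → β) : Prop :=
  ∀ t i, Monotone (fun s => G (update t i s)) ∨ Antitone (fun s => G (update t i s))

variable [Preorder α] [Preorder β] {G : (ι → α) → β}

theorem SeparatelyMonotone.dual (hG : SeparatelyMonotone G) :
    SeparatelyMonotone (OrderDual.toDual ∘ G) :=
  fun t i => (hG t i).symm

theorem SeparatelyMonotone.exists_le_update (hG : SeparatelyMonotone G) {lo hi : α} (t : ι → α)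
    (i : ι) (ht : t i ∈ Icc lo hi) : ∃ x ∈ ({lo, hi} : Set α), G t ≤ G (update t i x) := by
  rcases hG t i with hmono | hanti
  · exact ⟨hi, by simp, by simpa using hmono ht.2⟩
  · exact ⟨lo, by simp, by simpa using hanti ht.1⟩

theorem SeparatelyMonotone.exists_le_boxCorner [Finite ι] (hG : SeparatelyMonotone G)
    {lo hi t : ι → α} (ht : t ∈ Icc lo hi) : ∃ u ∈ boxCorners lo hi, G t ≤ G u := by
  have hle : lo ≤ hi := ht.1.trans ht.2
  cases nonempty_fintype ι
  -- Move the coordinates in `s` to vertices one at a time, never decreasing `G`.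
  suffices key : ∀ (s : Finset ι) (t : ι → α), t ∈ Icc lo hi →
      (∀ i ∉ s, t i ∈ ({lo i, hi i} : Set α)) → ∃ u ∈ boxCorners lo hi, G t ≤ G u from
    key Finset.univ t ht (by simp)
  intro s
  induction s using Finset.induction_on with
  | empty => exact fun t _ ht' => ⟨t, fun i _ => ht' i (Finset.notMem_empty i), le_rfl⟩
  | insert i s _ ih =>
    intro t ht ht'
    obtain ⟨x, hx, hGx⟩ := hG.exists_le_update t i ⟨ht.1 i, ht.2 i⟩
    have hx' : x ∈ Icc (lo i) (hi i) := by rcases hx with rfl | rfl <;> simp [hle i]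
    have hxt : update t i x ∈ Icc lo hi :=
      ⟨le_update_iff.2 ⟨hx'.1, fun j _ => ht.1 j⟩, update_le_iff.2 ⟨hx'.2, fun j _ => ht.2 j⟩⟩
    obtain ⟨u, hu, hGu⟩ := ih (update t i x) hxt fun j hj => by
      rcases eq_or_ne j i with rfl | hji
      · simpa using hx
      · simpa [hji] using ht' j (by simp [hji, hj])
    exact ⟨u, hu, hGx.trans hGu⟩

end SeparatelyMonotone

theorem exists_pi_Icc_mem_subset_of_mem_nhds {ι α : Type*} [Finite ι] [LinearOrder α]
    [TopologicalSpace α] [OrderTopology α] {a : ι → α} {U : Set (ι → α)} (hU : U ∈ 𝓝 a) :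
    ∃ lo hi, Icc lo hi ∈ 𝓝 a ∧ Icc lo hi ⊆ U := by
  rw [nhds_pi, Filter.mem_pi] at hU
  obtain ⟨I, -, V, hV, hVU⟩ := hU
  choose lo hi _ hnhds hsub using fun i => exists_Icc_mem_subset_of_mem_nhds (hV i)
  refine ⟨lo, hi, ?_, fun x hx => hVU fun i _ => hsub i ⟨hx.1 i, hx.2 i⟩⟩
  rw [← pi_univ_Icc]
  exact set_pi_mem_nhds finite_univ fun i _ => hnhds i

section JointContinuity

variable {ι α β T : Type*} [Finite ι] [DecidableEq ι] [LinearOrder α] [TopologicalSpace α]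
  [OrderTopology α] [TopologicalSpace T]

theorem upperSemicontinuous_uncurry_of_separatelyMonotone [Preorder β] {f : (ι → α) → T → β}
    (hslice : ∀ τ, UpperSemicontinuous fun t => f t τ) (hτ : ∀ t, UpperSemicontinuous (f t))
    (hm : ∀ τ, SeparatelyMonotone fun t => f t τ) : UpperSemicontinuous (uncurry f) := by
  rintro ⟨a, τ₀⟩ y hy
  obtain ⟨lo, hi, hbox, hboxU⟩ := exists_pi_Icc_mem_subset_of_mem_nhds (hslice τ₀ a y hy)
  have hle : lo ≤ hi := (mem_of_mem_nhds hbox).1.trans (mem_of_mem_nhds hbox).2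
  have hcorners : ∀ᶠ τ in 𝓝 τ₀, ∀ u ∈ boxCorners lo hi, f u τ < y :=
    (eventually_all_finite (finite_boxCorners lo hi)).2 fun u hu =>
      hτ u τ₀ y (hboxU (boxCorners_subset_Icc hle hu))
  filter_upwards [Filter.Eventually.prod_nhds hbox hcorners] with ⟨t, τ⟩ ⟨ht, hτy⟩
  obtain ⟨u, hu, hfu⟩ := (hm τ).exists_le_boxCorner ht
  exact hfu.trans_lt (hτy u hu)

theorem continuous_uncurry_of_separatelyMonotone [LinearOrder β] [TopologicalSpace β]
    [OrderTopology β] {f : (ι → α) → T → β} (hslice : ∀ τ, Continuous fun t => f t τ)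
    (hτ : ∀ t, Continuous (f t)) (hm : ∀ τ, SeparatelyMonotone fun t => f t τ) :
    Continuous (uncurry f) :=
  continuous_iff_lower_upperSemicontinuous.2
    ⟨upperSemicontinuous_uncurry_of_separatelyMonotone (β := βᵒᵈ)
        (fun τ => (hslice τ).lowerSemicontinuous) (fun t => (hτ t).lowerSemicontinuous)
        fun τ => (hm τ).dual,
      upperSemicontinuous_uncurry_of_separatelyMonotone
        (fun τ => (hslice τ).upperSemicontinuous) (fun t => (hτ t).upperSemicontinuous) hm⟩

end JointContinuity

theorem SeparatelyMonotone.continuous {α β : Type*} [LinearOrder α] [TopologicalSpace α]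
    [OrderTopology α] [LinearOrder β] [TopologicalSpace β] [OrderTopology β] :
    ∀ {n : ℕ} {G : (Fin n → α) → β}, SeparatelyMonotone G →
      (∀ t i, Continuous fun s => G (update t i s)) → Continuous G
  | 0, _, _, _ => continuous_of_const fun _ _ => congrArg _ (Subsingleton.elim _ _)
  | n + 1, G, hm, hcont => by
    have hsnoc : Continuous (uncurry fun (t : Fin n → α) s => G (Fin.snoc t s)) := by
      refine continuous_uncurry_of_separatelyMonotone (fun s => ?_) (fun t => ?_) fun s => ?_
      · refine SeparatelyMonotone.continuous (fun t i => ?_) fun t i => ?_ <;>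
          simp only [Fin.snoc_update]
        exacts [hm _ _, hcont _ _]
      · refine continuous_iff_continuousAt.2 fun s => ?_
        simpa only [Fin.update_snoc_last] using (hcont (Fin.snoc t s) (Fin.last n)).continuousAt
      · intro t i
        simp only [Fin.snoc_update]
        exact hm _ _
    have hsplit : Continuous fun v : Fin (n + 1) → α => (Fin.init v, v (Fin.last n)) :=
      (continuous_pi fun _ => continuous_apply _).prodMk (continuous_apply _)
    simpa only [comp_def, uncurry_apply_pair, Fin.snoc_init_self] using hsnoc.comp hsplit

theorem kruse_deely_general (d : ℕ) (f : (Fin d → ℝ) → ℝ → ℝ)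
    (hct : ∀ (t : Fin d → ℝ) (τ : ℝ) (i : Fin d),
      Continuous fun s => f (Function.update t i s) τ)
    (hcτ : ∀ t : Fin d → ℝ, Continuous fun τ => f t τ)
    (hm : ∀ (t : Fin d → ℝ) (τ : ℝ) (i : Fin d),
      Monotone (fun s => f (Function.update t i s) τ) ∨
      Antitone (fun s => f (Function.update t i s) τ)) :
    Continuous fun p : (Fin d → ℝ) × ℝ => f p.1 p.2 :=
  continuous_uncurry_of_separatelyMonotone
    (fun τ => SeparatelyMonotone.continuous (fun t i => hm t τ i) fun t i => hct t τ i) hcτ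
    fun τ t i => hm t τ i

theorem kruse_deely (d : ℕ) (hd : 1 ≤ d) (f : (Fin d → ℝ) → ℝ → ℝ)
    (hct : ∀ (t : Fin d → ℝ) (τ : ℝ) (i : Fin d),
      Continuous fun s => f (Function.update t i s) τ)
    (hcτ : ∀ t : Fin d → ℝ, Continuous fun τ => f t τ)
    (hm : ∀ (t : Fin d → ℝ) (τ : ℝ) (i : Fin d),
      Monotone (fun s => f (Function.update t i s) τ) ∨
      Antitone (fun s => f (Function.update t i s) τ)) :
    Continuous fun p : (Fin d → ℝ) × ℝ => f p.1 p.2 :=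
  kruse_deely_general d f hct hcτ hm
end

section
/- Let T₀, T₁, T₂ be linearly ordered sets with order topologies and X a topological space. If f : T₁ × T₂ × X → T₀ is continuous in each of its three variables separately, and f is monotone in t₁ (for each fixed (t₂,x)) and monotone in t₂ (for each fixed (t₁,x)), then f is jointly continuous on T₁ × T₂ × X with the product topology. -/
/-!
Near `(t, y)`, a strict lower bound `a < f t y` persists: continuity in `t` gives an order
neighbourhood `[u, v]` of `t` with `a < f u y` and `a < f v y`, continuity in `y` keeps both
inequalities for `y'` near `y`, and since `f · y'` is monotone or antitone, every value `f s y'`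
with `s ∈ [u, v]` lies above `f u y'` or above `f v y'`. Upper bounds follow by reversing the
order of the codomain. Two order variables are handled by applying this twice, first to
`(t₂, x)` and then to `(t₁, (t₂, x))`.
-/

open Set Filter Topology

section OneOrderVariable

variable {T₀ T Y : Type*} [LinearOrder T₀] [TopologicalSpace T₀] [OrderTopology T₀]
  [LinearOrder T] [TopologicalSpace T] [OrderTopology T] [TopologicalSpace Y]

theorem eventually_lt_uncurry_of_monotone_or_antitone {f : T → Y → T₀}
    (hct : ∀ y, Continuous fun t => f t y) (hcy : ∀ t, Continuous (f t))
    (hm : ∀ y, Monotone (fun t => f t y) ∨ Antitone (fun t => f t y))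
    {a : T₀} {t : T} {y : Y} (ha : a < f t y) :
    ∀ᶠ p in 𝓝 (t, y), a < Function.uncurry f p := by
  obtain ⟨u, v, htuv, huv_nhds, huv_sub⟩ :=
    exists_Icc_mem_subset_of_mem_nhds (((hct y).tendsto t).eventually_const_lt ha)
  have huv : u ≤ v := htuv.1.trans htuv.2
  have hu : ∀ᶠ y' in 𝓝 y, a < f u y' :=
    ((hcy u).tendsto y).eventually_const_lt (huv_sub (left_mem_Icc.2 huv))
  have hv : ∀ᶠ y' in 𝓝 y, a < f v y' :=
    ((hcy v).tendsto y).eventually_const_lt (huv_sub (right_mem_Icc.2 huv))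
  rw [nhds_prod_eq]
  filter_upwards [prod_mem_prod huv_nhds (hu.and hv)] with ⟨s, y'⟩ ⟨⟨hus, hsv⟩, hu', hv'⟩
  rcases hm y' with hmono | hanti
  · exact hu'.trans_le (hmono hus)
  · exact hv'.trans_le (hanti hsv)

theorem continuous_uncurry_of_monotone_or_antitone {f : T → Y → T₀}
    (hct : ∀ y, Continuous fun t => f t y) (hcy : ∀ t, Continuous (f t))
    (hm : ∀ y, Monotone (fun t => f t y) ∨ Antitone (fun t => f t y)) :
    Continuous (Function.uncurry f) := by
  refine continuous_iff_continuousAt.2 fun ⟨t, y⟩ => tendsto_order.2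
    ⟨fun a ha => eventually_lt_uncurry_of_monotone_or_antitone hct hcy hm ha,
      fun b hb => ?_⟩
  let g : T → Y → T₀ᵒᵈ := fun t y => OrderDual.toDual (f t y)
  exact eventually_lt_uncurry_of_monotone_or_antitone (f := g)
    (fun y => continuous_toDual.comp (hct y)) (fun t => continuous_toDual.comp (hcy t))
    (fun y => (hm y).symm.imp Antitone.dual_right Monotone.dual_right) hb

end OneOrderVariable

theorem young_two_orders {T₀ T₁ T₂ X : Type*}
    [LinearOrder T₀] [TopologicalSpace T₀] [OrderTopology T₀]
    [LinearOrder T₁] [TopologicalSpace T₁] [OrderTopology T₁]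
    [LinearOrder T₂] [TopologicalSpace T₂] [OrderTopology T₂]
    [TopologicalSpace X]
    (f : T₁ → T₂ → X → T₀)
    (hc1 : ∀ t₂ x, Continuous fun t₁ => f t₁ t₂ x)
    (hc2 : ∀ t₁ x, Continuous fun t₂ => f t₁ t₂ x)
    (hcx : ∀ t₁ t₂, Continuous fun x => f t₁ t₂ x)
    (hm1 : ∀ t₂ x, Monotone (fun t₁ => f t₁ t₂ x) ∨ Antitone (fun t₁ => f t₁ t₂ x))
    (hm2 : ∀ t₁ x, Monotone (fun t₂ => f t₁ t₂ x) ∨ Antitone (fun t₂ => f t₁ t₂ x)) :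
    Continuous fun p : T₁ × T₂ × X => f p.1 p.2.1 p.2.2 := by
  have hc23 : ∀ t₁, Continuous fun p : T₂ × X => f t₁ p.1 p.2 := fun t₁ =>
    continuous_uncurry_of_monotone_or_antitone (hc2 t₁) (hcx t₁) (hm2 t₁)
  exact continuous_uncurry_of_monotone_or_antitone (f := fun t₁ (p : T₂ × X) => f t₁ p.1 p.2)
    (fun p => hc1 p.1 p.2) hc23 (fun p => hm1 p.1 p.2)
end

section
/- Let G ⊆ ℝ² be an open set and f : G → ℝ continuous in each variable separately on G, such that for each fixed y, the map x ↦ f(x,y) is monotone on every interval contained in the corresponding section of G. Then f is continuous on G. -/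
/-!
Given an interval neighbourhood `[c, d]` of `f a b`, continuity in `x` yields `u < a < v` with
`f u b` and `f v b` in the interior of `[c, d]`. By continuity in `y`, `f u y` and `f v y` stay in
`[c, d]` for `y` near `b`, and monotonicity of `f · y` on `[u, v]` traps `f x y` between them for
every `x ∈ (u, v)`.
-/

open Set Filter Topology

theorem continuousAt_uncurry_of_monotoneOn_or_antitoneOn
    {α β γ : Type*} [LinearOrder α] [TopologicalSpace α] [OrderTopology α] [DenselyOrdered α]
    [NoMinOrder α] [NoMaxOrder α] [TopologicalSpace β]
    [LinearOrder γ] [TopologicalSpace γ] [OrderTopology γ]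
    {f : α → β → γ} {a : α} {b : β} {U : Set α} (hU : U ∈ 𝓝 a) (hUc : U.OrdConnected)
    (hm : ∀ᶠ y in 𝓝 b, MonotoneOn (f · y) U ∨ AntitoneOn (f · y) U)
    (hx : ContinuousAt (f · b) a) (hy : ∀ᶠ x in 𝓝 a, ContinuousAt (f x) b) :
    ContinuousAt (Function.uncurry f) (a, b) := by
  intro s hs
  obtain ⟨c, d, -, ht, hts⟩ := exists_Icc_mem_subset_of_mem_nhds hs
  have hgood :
      ∀ᶠ x in 𝓝 a, x ∈ U ∧ f x b ∈ interior (Icc c d) ∧ ContinuousAt (f x) b := by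
    filter_upwards [hU, hx.preimage_mem_nhds (interior_mem_nhds.2 ht), hy] with x hxU hxt hxc
    exact ⟨hxU, hxt, hxc⟩
  obtain ⟨u, hua, huU, hut, hu⟩ := hgood.exists_lt
  obtain ⟨v, hav, hvU, hvt, hv⟩ := hgood.exists_gt
  have hnear : ∀ᶠ y in 𝓝 b, f u y ∈ Icc c d ∧ f v y ∈ Icc c d ∧
      (MonotoneOn (f · y) U ∨ AntitoneOn (f · y) U) := by
    filter_upwards [hu.preimage_mem_nhds (isOpen_interior.mem_nhds hut),
      hv.preimage_mem_nhds (isOpen_interior.mem_nhds hvt), hm] with y huy hvy hmy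
    exact ⟨interior_subset huy, interior_subset hvy, hmy⟩
  refine mem_map.2 <| mem_of_superset (prod_mem_nhds (Ioo_mem_nhds hua hav) hnear) ?_
  rintro ⟨x, y⟩ ⟨hxIoo, huy, hvy, hmy⟩
  have hxuv : x ∈ uIcc u v := Icc_subset_uIcc (Ioo_subset_Icc_self hxIoo)
  have hsub : uIcc u v ⊆ U := hUc.uIcc_subset huU hvU
  have hbetween : f x y ∈ uIcc (f u y) (f v y) := by
    rcases hmy with hmono | hanti
    · exact (hmono.mono hsub).mapsTo_uIcc hxuv
    · exact (hanti.mono hsub).mapsTo_uIcc hxuv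
  exact hts (ordConnected_Icc.uIcc_subset huy hvy hbetween)

theorem young_open_set (G : Set (ℝ × ℝ)) (hG : IsOpen G) (f : ℝ → ℝ → ℝ)
    (hcx : ∀ y : ℝ, ContinuousOn (fun x => f x y) {x | (x, y) ∈ G})
    (hcy : ∀ x : ℝ, ContinuousOn (fun y => f x y) {y | (x, y) ∈ G})
    (hm : ∀ (y : ℝ) (I : Set ℝ), I.OrdConnected → I ⊆ {x | (x, y) ∈ G} →
      MonotoneOn (fun x => f x y) I ∨ AntitoneOn (fun x => f x y) I) :
    ContinuousOn (fun p : ℝ × ℝ => f p.1 p.2) G := by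
  rintro ⟨a, b⟩ hp
  obtain ⟨U, hU, V, hV, hUV⟩ := mem_nhds_prod_iff.1 (hG.mem_nhds hp)
  obtain ⟨c, d, -, hI, hIU⟩ := exists_Icc_mem_subset_of_mem_nhds hU
  have hbox : ∀ y ∈ V, Icc c d ⊆ {x | (x, y) ∈ G} := fun y hy x hx => hUV ⟨hIU hx, hy⟩
  refine (continuousAt_uncurry_of_monotoneOn_or_antitoneOn hI ordConnected_Icc ?_ ?_ ?_)
    |>.continuousWithinAt
  · filter_upwards [hV] with y hy using hm y _ ordConnected_Icc (hbox y hy)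
  · exact (hcx b).continuousAt ((hG.preimage (by fun_prop)).mem_nhds hp)
  · filter_upwards [hI] with x hx
    exact (hcy x).continuousAt
      ((hG.preimage (by fun_prop)).mem_nhds (hbox b (mem_of_mem_nhds hV) hx))
end

section
/- Let f : ℝ³ → ℝ be continuous in each of its three variables separately and monotone in the first and second variables separately. Then f is jointly continuous on ℝ³. -/
/-!
Young's criterion: if `g x y` is continuous in each variable and monotone (or antitone) in `x`
for every `y`, then near `(x₀, y₀)` the value `g x y` is squeezed between `g a y` and `g b y`
for an interval `a ≤ x₀ ≤ b`. Continuity in `x` puts both bounds at `y₀` inside a given open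
interval around `g x₀ y₀` once `a, b` are close to `x₀`, and continuity in `y` keeps them
there for `y` near `y₀`. Applying the criterion twice, first to
`(t₂, τ) ↦ f t₁ t₂ τ` and then to `t₁ ↦ f t₁ · ·`, gives joint continuity on `ℝ³`.
-/

open Filter Set Topology

section

variable {X Y β : Type*} [TopologicalSpace X] [LinearOrder X] [OrderTopology X]
  [TopologicalSpace Y] [TopologicalSpace β] {g : X → Y → β}

theorem eventually_mem_of_monotone_or_antitone [Preorder β]
    (hx : ∀ y, Continuous fun x => g x y) (hy : ∀ x, Continuous (g x))
    (hm : ∀ y, Monotone (fun x => g x y) ∨ Antitone (fun x => g x y))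
    {x₀ : X} {y₀ : Y} {s : Set β} (hso : IsOpen s) (hsc : s.OrdConnected)
    (hs : g x₀ y₀ ∈ s) :
    ∀ᶠ p in 𝓝 (x₀, y₀), g p.1 p.2 ∈ s := by
  obtain ⟨a, b, hx₀, hab_nhds, hab_sub⟩ :=
    exists_Icc_mem_subset_of_mem_nhds ((hx y₀).continuousAt.preimage_mem_nhds (hso.mem_nhds hs))
  have hab : a ≤ b := hx₀.1.trans hx₀.2
  have ha : ∀ᶠ y in 𝓝 y₀, g a y ∈ s :=
    (hy a).continuousAt.preimage_mem_nhds (hso.mem_nhds (hab_sub (left_mem_Icc.2 hab)))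
  have hb : ∀ᶠ y in 𝓝 y₀, g b y ∈ s :=
    (hy b).continuousAt.preimage_mem_nhds (hso.mem_nhds (hab_sub (right_mem_Icc.2 hab)))
  filter_upwards [Eventually.prod_nhds hab_nhds (ha.and hb)] with ⟨x, y⟩ ⟨⟨hax, hxb⟩, hay, hby⟩
  rcases hm y with hmono | hanti
  · exact hsc.out hay hby ⟨hmono hax, hmono hxb⟩
  · exact hsc.out hby hay ⟨hanti hxb, hanti hax⟩

theorem continuous_uncurry_of_monotone_or_antitone_s16 [LinearOrder β] [OrderTopology β]
    (hx : ∀ y, Continuous fun x => g x y) (hy : ∀ x, Continuous (g x))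
    (hm : ∀ y, Monotone (fun x => g x y) ∨ Antitone (fun x => g x y)) :
    Continuous (Function.uncurry g) := by
  refine continuous_iff_continuousAt.2 fun ⟨x₀, y₀⟩ => tendsto_order.2 ⟨?_, ?_⟩
  · exact fun u hu => eventually_mem_of_monotone_or_antitone hx hy hm isOpen_Ioi ordConnected_Ioi hu
  · exact fun v hv => eventually_mem_of_monotone_or_antitone hx hy hm isOpen_Iio ordConnected_Iio hv

end

theorem young_real_three (f : ℝ → ℝ → ℝ → ℝ)
    (hc1 : ∀ t₂ τ, Continuous fun t₁ => f t₁ t₂ τ)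
    (hc2 : ∀ t₁ τ, Continuous fun t₂ => f t₁ t₂ τ)
    (hc3 : ∀ t₁ t₂, Continuous fun τ => f t₁ t₂ τ)
    (hm1 : ∀ t₂ τ, Monotone (fun t₁ => f t₁ t₂ τ) ∨ Antitone (fun t₁ => f t₁ t₂ τ))
    (hm2 : ∀ t₁ τ, Monotone (fun t₂ => f t₁ t₂ τ) ∨ Antitone (fun t₂ => f t₁ t₂ τ)) :
    Continuous fun p : ℝ × ℝ × ℝ => f p.1 p.2.1 p.2.2 := by
  have hc23 : ∀ t₁, Continuous fun q : ℝ × ℝ => f t₁ q.1 q.2 := fun t₁ =>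
    continuous_uncurry_of_monotone_or_antitone_s16 (hc2 t₁) (hc3 t₁) (hm2 t₁)
  exact continuous_uncurry_of_monotone_or_antitone_s16 (g := fun t₁ (q : ℝ × ℝ) => f t₁ q.1 q.2)
    (fun q => hc1 q.1 q.2) hc23 (fun q => hm1 q.1 q.2)
end
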